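/- arXiv:1709.10306 — 2 statements merged into one kernel-verified Lean document; each statement's English description precedes it below -/
import Mathlib

section
/- Let G be a group, H a subgroup of index 2, and π' an irreducible representation of H over an algebraically closed field E of characteristic 0 which extends to an irreducible representation of G. Then the induced representation Ind_H^G π' is the direct sum of two irreducible representations of G. -/
open TensorProduct

section Ind

variable {E G V : Type*} [Field E] [Group G] [AddCommGroup V] [Module E V]

/-- The space of the representation of `G` induced from a representation `π` of a subgroup
`H ≤ G`: functions `f : G → V` with `f(hg) = π(h)(f(g))`. -/
def indSubmodule (H : Subgroup G) (π : Representation E H V) : Submodule E (G → V) where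
  carrier := {f | ∀ (h : H) (g : G), f (↑h * g) = π h (f g)}
  zero_mem' := fun h g => by simp
  add_mem' := fun {f₁ f₂} h1 h2 h g => by simp [h1 h g, h2 h g]
  smul_mem' := fun c f hf h g => by simp [hf h g]

/-- The induced representation `Ind_H^G π`, with `G` acting by right translation. -/
def indRep (H : Subgroup G) (π : Representation E H V) :
    Representation E G ↥(indSubmodule H π) where
  toFun g :=
    { toFun := fun f => ⟨fun x => (f : G → V) (x * g), fun h x => by
        show (f : G → V) (↑h * x * g) = π h ((f : G → V) (x * g))
        rw [mul_assoc]; exact f.2 h (x * g)⟩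
      map_add' := fun f₁ f₂ => rfl
      map_smul' := fun c f => rfl }
  map_one' := by
    apply LinearMap.ext; intro f; apply Subtype.ext; funext x; simp
  map_mul' := fun g₁ g₂ => by
    apply LinearMap.ext; intro f; apply Subtype.ext; funext x
    show (f : G → V) (x * (g₁ * g₂)) = (f : G → V) (x * g₁ * g₂)
    rw [mul_assoc]

end Ind

/-- An irreducible representation: the space is nontrivial and the only invariant subspaces
are `⊥` and `⊤`. -/
def IsIrreducibleRep {E G V : Type*} [Field E] [AddCommGroup V] [Module E V] [Group G]
    (π : Representation E G V) : Prop :=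
  Nontrivial V ∧ ∀ W : Submodule E V, (∀ (g : G) (v : V), v ∈ W → π g v ∈ W) → W = ⊥ ∨ W = ⊤


section Aux

variable {E G V : Type*} [Field E] [Group G] [AddCommGroup V] [Module E V]
variable (H : Subgroup G) (π' : Representation E H V) (PI : Representation E G V)

/-- The subspace of the induced representation corresponding to a character `χ` of `G/H`. -/
def myW (χ : G → E) : Submodule E ↥(indSubmodule H π') where
  carrier := {f | ∀ g : G, (f : G → V) g = χ g • PI g ((f : G → V) 1)}
  zero_mem' := fun g => by simp
  add_mem' := fun {f₁ f₂} h1 h2 g => by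
    have : ((f₁ + f₂ : ↥(indSubmodule H π')) : G → V) = (f₁ : G → V) + (f₂ : G → V) := rfl
    simp only [this, _root_.Pi.add_apply, map_add, smul_add, h1 g, h2 g]
  smul_mem' := fun c f hf g => by
    have : ((c • f : ↥(indSubmodule H π')) : G → V) = c • (f : G → V) := rfl
    simp only [this, _root_.Pi.smul_apply, map_smul, hf g, smul_comm c]

lemma mem_myW_iff {χ : G → E} {f : ↥(indSubmodule H π')} :
    f ∈ myW H π' PI χ ↔ ∀ g : G, (f : G → V) g = χ g • PI g ((f : G → V) 1) := Iff.rfl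

lemma myW_eval_one_eq_zero {χ : G → E} {f : ↥(indSubmodule H π')}
    (hf : f ∈ myW H π' PI χ) (h0 : (f : G → V) 1 = 0) : f = 0 := by
  apply Subtype.ext
  funext g
  rw [hf g, h0, map_zero, smul_zero]; rfl

lemma indRep_apply_fun (g : G) (f : ↥(indSubmodule H π')) (x : G) :
    (indRep H π' g f : G → V) x = (f : G → V) (x * g) := rfl

lemma myW_invariant {χ : G → E} (hχmul : ∀ a b : G, χ (a * b) = χ a * χ b)
    (g : G) (f : ↥(indSubmodule H π')) (hf : f ∈ myW H π' PI χ) :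
    indRep H π' g f ∈ myW H π' PI χ := by
  intro x
  rw [indRep_apply_fun, indRep_apply_fun, one_mul, hf (x * g), hf g, hχmul x g, map_mul]
  simp [mul_smul, Module.End.mul_apply, map_smul]

/-- The element of the induced representation attached to `v : V` and a character `χ`. -/
def myElt (hres : ∀ h : H, PI ↑h = π' h) (χ : G → E) (hχH : ∀ h : H, χ ↑h = 1)
    (hχmul : ∀ a b : G, χ (a * b) = χ a * χ b) (v : V) : ↥(indSubmodule H π') :=
  ⟨fun g => χ g • PI g v, fun h g => by
    simp only [hχmul, hχH h, one_mul, map_mul, Module.End.mul_apply, map_smul, hres h]⟩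

lemma myElt_mem (hres : ∀ h : H, PI ↑h = π' h) (χ : G → E) (hχH : ∀ h : H, χ ↑h = 1)
    (hχmul : ∀ a b : G, χ (a * b) = χ a * χ b) (v : V) :
    myElt H π' PI hres χ hχH hχmul v ∈ myW H π' PI χ := by
  intro g
  show χ g • PI g v = χ g • PI g (χ 1 • PI 1 v)
  have h1 : χ 1 = 1 := by simpa using hχH 1
  simp [h1]

lemma myW_irreducible (hPi : IsIrreducibleRep PI) (hres : ∀ h : H, PI ↑h = π' h)
    {χ : G → E} (hχ0 : ∀ g, χ g ≠ 0)
    (U : Submodule E ↥(indSubmodule H π')) (hU : U ≤ myW H π' PI χ)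
    (hUinv : ∀ (g : G) (w : ↥(indSubmodule H π')), w ∈ U → indRep H π' g w ∈ U) :
    U = ⊥ ∨ U = myW H π' PI χ := by
  let ev : ↥(indSubmodule H π') →ₗ[E] V :=
    (LinearMap.proj (1 : G)).comp (indSubmodule H π').subtype
  have hev : ∀ f : ↥(indSubmodule H π'), ev f = (f : G → V) 1 := fun f => rfl
  have hU'inv : ∀ (g : G) (v : V), v ∈ U.map ev → PI g v ∈ U.map ev := by
    rintro g v ⟨f, hfU, rfl⟩
    have h1 : (indRep H π' g f : G → V) 1 = χ g • PI g ((f : G → V) 1) := by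
      rw [indRep_apply_fun, one_mul]; exact hU hfU g
    have key : PI g (ev f) = (χ g)⁻¹ • ev (indRep H π' g f) := by
      rw [hev, hev, h1, smul_smul, inv_mul_cancel₀ (hχ0 g), one_smul]
    rw [key]
    exact Submodule.smul_mem _ _ (Submodule.mem_map_of_mem (hUinv g f hfU))
  rcases hPi.2 (U.map ev) hU'inv with h | h
  · left
    rw [eq_bot_iff]
    intro f hf
    have h0 : ev f = 0 := by
      have := Submodule.mem_map_of_mem (f := ev) hf
      rw [h, Submodule.mem_bot] at this
      exact this
    rw [Submodule.mem_bot]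
    exact myW_eval_one_eq_zero H π' PI (hU hf) h0
  · right
    refine le_antisymm hU fun f hf => ?_
    have : ev f ∈ U.map ev := h ▸ Submodule.mem_top
    obtain ⟨f', hf'U, hf'⟩ := this
    have hsub : f - f' ∈ myW H π' PI χ := Submodule.sub_mem _ hf (hU hf'U)
    have h0 : ((f - f' : ↥(indSubmodule H π')) : G → V) 1 = 0 := by
      have : ((f - f' : ↥(indSubmodule H π')) : G → V) 1
          = (f : G → V) 1 - (f' : G → V) 1 := rfl
      rw [this, hev] at *
      rw [hf']
      exact sub_self _
    have := myW_eval_one_eq_zero H π' PI hsub h0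
    have hff' : f = f' := by
      have := sub_eq_zero.mp (by exact_mod_cast this)
      exact this
    rw [hff']
    exact hf'U

end Aux

/-- Let `H ≤ G` be of index 2 and `π'` an irreducible finite-dimensional
representation of `H` over an algebraically closed field `E` of characteristic 0 which
extends to an irreducible representation of `G`.  Then `Ind_H^G π'` is the direct sum of
two (nonzero) irreducible subrepresentations. -/
theorem stmt3 {E G V : Type*} [Field E] [CharZero E] [IsAlgClosed E] [Group G]
    [AddCommGroup V] [Module E V] [FiniteDimensional E V]
    (H : Subgroup G) (hH : H.index = 2)
    (π' : Representation E H V) (hirr : IsIrreducibleRep π')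
    (hext : ∃ Pi : Representation E G V, IsIrreducibleRep Pi ∧ ∀ h : H, Pi ↑h = π' h) :
    ∃ W₁ W₂ : Submodule E ↥(indSubmodule H π'),
      (∀ (g : G) (w : ↥(indSubmodule H π')), w ∈ W₁ → indRep H π' g w ∈ W₁) ∧
      (∀ (g : G) (w : ↥(indSubmodule H π')), w ∈ W₂ → indRep H π' g w ∈ W₂) ∧
      IsCompl W₁ W₂ ∧ W₁ ≠ ⊥ ∧ W₂ ≠ ⊥ ∧
      (∀ U : Submodule E ↥(indSubmodule H π'), U ≤ W₁ →
        (∀ (g : G) (w : ↥(indSubmodule H π')), w ∈ U → indRep H π' g w ∈ U) →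
        U = ⊥ ∨ U = W₁) ∧
      (∀ U : Submodule E ↥(indSubmodule H π'), U ≤ W₂ →
        (∀ (g : G) (w : ↥(indSubmodule H π')), w ∈ U → indRep H π' g w ∈ U) →
        U = ⊥ ∨ U = W₂) := by
  classical
  obtain ⟨PI, hPiirr, hres⟩ := hext
  have hmul : ∀ a b : G, a * b ∈ H ↔ (a ∈ H ↔ b ∈ H) :=
    fun a b => Subgroup.mul_mem_iff_of_index_two hH
  -- the two characters of G trivial on H
  set χ₁ : G → E := fun _ => 1 with hχ₁def
  set χ₂ : G → E := fun g => if g ∈ H then 1 else -1 with hχ₂def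
  have hχ₁H : ∀ h : H, χ₁ ↑h = 1 := fun h => rfl
  have hχ₂H : ∀ h : H, χ₂ ↑h = 1 := fun h => if_pos h.2
  have hχ₁mul : ∀ a b : G, χ₁ (a * b) = χ₁ a * χ₁ b := fun a b => (one_mul 1).symm
  have hχ₂mul : ∀ a b : G, χ₂ (a * b) = χ₂ a * χ₂ b := by
    intro a b
    simp only [hχ₂def]
    by_cases ha : a ∈ H <;> by_cases hb : b ∈ H <;>
      simp [ha, hb, hmul a b]
  have hχ₁0 : ∀ g, χ₁ g ≠ 0 := fun g => one_ne_zero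
  have hχ₂0 : ∀ g, χ₂ g ≠ 0 := by
    intro g; by_cases hg : g ∈ H <;> simp [hχ₂def, hg]
  -- an element s outside H
  have hHne : H ≠ ⊤ := by
    intro h
    rw [h, Subgroup.index_top] at hH
    exact absurd hH (by norm_num)
  obtain ⟨s, hs⟩ : ∃ s : G, s ∉ H := by
    by_contra hcon
    push_neg at hcon
    exact hHne ((Subgroup.eq_top_iff' H).mpr hcon)
  obtain ⟨hVnt, hPiirr2⟩ := hPiirr
  refine ⟨myW H π' PI χ₁, myW H π' PI χ₂,
    myW_invariant H π' PI hχ₁mul, myW_invariant H π' PI hχ₂mul, ?_, ?_, ?_,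
    myW_irreducible H π' PI ⟨hVnt, hPiirr2⟩ hres hχ₁0,
    myW_irreducible H π' PI ⟨hVnt, hPiirr2⟩ hres hχ₂0⟩
  · -- IsCompl
    constructor
    · rw [disjoint_iff_inf_le]
      rintro f ⟨hf1, hf2⟩
      have e1 : (f : G → V) s = PI s ((f : G → V) 1) := by
        have := hf1 s; simpa [hχ₁def] using this
      have e2 : (f : G → V) s = -PI s ((f : G → V) 1) := by
        have := hf2 s
        rw [hχ₂def] at this
        simpa [hs] using this
      have h0 : PI s ((f : G → V) 1) = 0 := by
        have : PI s ((f : G → V) 1) = -PI s ((f : G → V) 1) := e1 ▸ e2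
        have h2 : (2 : E) • PI s ((f : G → V) 1) = 0 := by
          rw [two_smul]
          nth_rewrite 2 [this]
          exact add_neg_cancel _
        exact (smul_eq_zero.mp h2).resolve_left two_ne_zero
      have h1 : (f : G → V) 1 = 0 := by
        have : PI s⁻¹ (PI s ((f : G → V) 1)) = (f : G → V) 1 := by
          rw [← Module.End.mul_apply, ← map_mul, inv_mul_cancel, map_one,
            Module.End.one_apply]
        rw [← this, h0, map_zero]
      rw [Submodule.mem_bot]
      exact myW_eval_one_eq_zero H π' PI hf1 h1
    · rw [codisjoint_iff_le_sup]
      intro f _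
      set a : V := (f : G → V) 1 with ha
      set b : V := PI s⁻¹ ((f : G → V) s) with hb
      have hPisb : PI s b = (f : G → V) s := by
        rw [hb, ← Module.End.mul_apply, ← map_mul, mul_inv_cancel, map_one,
          Module.End.one_apply]
      set v₁ : V := (2 : E)⁻¹ • (a + b) with hv₁
      set v₂ : V := (2 : E)⁻¹ • (a - b) with hv₂
      have hv12 : v₁ + v₂ = a := by
        rw [hv₁, hv₂, ← smul_add]
        have : a + b + (a - b) = (2 : E) • a := by rw [two_smul]; abel
        rw [this, smul_smul, inv_mul_cancel₀ (two_ne_zero : (2:E) ≠ 0), one_smul]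
      have hv12' : v₁ - v₂ = b := by
        rw [hv₁, hv₂, ← smul_sub]
        have : a + b - (a - b) = (2 : E) • b := by rw [two_smul]; abel
        rw [this, smul_smul, inv_mul_cancel₀ (two_ne_zero : (2:E) ≠ 0), one_smul]
      set f₁ := myElt H π' PI hres χ₁ hχ₁H hχ₁mul v₁ with hf₁
      set f₂ := myElt H π' PI hres χ₂ hχ₂H hχ₂mul v₂ with hf₂
      have hfeq : f = f₁ + f₂ := by
        apply Subtype.ext
        funext g
        have hrhs : ((f₁ + f₂ : ↥(indSubmodule H π')) : G → V) g
            = χ₁ g • PI g v₁ + χ₂ g • PI g v₂ := rfl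
        rw [hrhs]
        by_cases hg : g ∈ H
        · have hfg : (f : G → V) g = PI g a := by
            have := f.2 ⟨g, hg⟩ 1
            rw [mul_one] at this
            rw [this, ← hres ⟨g, hg⟩]
          rw [hfg, hχ₂def]
          simp only [hχ₁def, hg, if_pos, one_smul]
          rw [← map_add, hv12]
        · have hgs : g * s⁻¹ ∈ H := by
            rw [hmul]
            simp [hg, hs]
          have hfg : (f : G → V) g = PI g b := by
            have := f.2 ⟨g * s⁻¹, hgs⟩ s
            have hgs2 : (g * s⁻¹) * s = g := by group
            rw [hgs2] at this
            rw [this, ← hres ⟨g * s⁻¹, hgs⟩, ← hPisb, ← Module.End.mul_apply,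
              ← map_mul, hgs2]
          rw [hfg, hχ₂def]
          simp only [hχ₁def, hg, if_neg, one_smul, neg_smul, not_false_iff]
          rw [← sub_eq_add_neg, ← map_sub, hv12']
      rw [hfeq]
      exact Submodule.add_mem_sup (myElt_mem H π' PI hres χ₁ hχ₁H hχ₁mul v₁)
        (myElt_mem H π' PI hres χ₂ hχ₂H hχ₂mul v₂)
  · -- W₁ ≠ ⊥
    obtain ⟨v, hv⟩ := exists_ne (0 : V)
    intro hbot
    have hm : myElt H π' PI hres χ₁ hχ₁H hχ₁mul v ∈ myW H π' PI χ₁ :=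
      myElt_mem H π' PI hres χ₁ hχ₁H hχ₁mul v
    rw [hbot, Submodule.mem_bot] at hm
    apply hv
    have : (myElt H π' PI hres χ₁ hχ₁H hχ₁mul v : G → V) 1 = χ₁ 1 • PI 1 v := rfl
    rw [hm] at this
    simpa [hχ₁def] using this.symm
  · -- W₂ ≠ ⊥
    obtain ⟨v, hv⟩ := exists_ne (0 : V)
    intro hbot
    have hm : myElt H π' PI hres χ₂ hχ₂H hχ₂mul v ∈ myW H π' PI χ₂ :=
      myElt_mem H π' PI hres χ₂ hχ₂H hχ₂mul v
    rw [hbot, Submodule.mem_bot] at hm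
    apply hv
    have : (myElt H π' PI hres χ₂ hχ₂H hχ₂mul v : G → V) 1 = χ₂ 1 • PI 1 v := rfl
    rw [hm] at this
    have h1 : χ₂ 1 = 1 := by simpa using hχ₂H 1
    simpa [h1] using this.symm
end

section
/- Let (A, m) be a complete Noetherian local ring with finite residue field of characteristic p, G a profinite group, and 0 → V₁ → V₂ → V₃ → 0 a short exact sequence of smooth A[G]-modules. If V₁ and V₃ are admissible, then V₂ is admissible. -/
section Defs

variable (A : Type*) [CommRing A] (G : Type*) [Group G] [TopologicalSpace G]
  (M : Type*) [AddCommGroup M] [Module A M] [DistribMulAction G M] [SMulCommClass G A M]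

/-- The `A`-submodule of vectors invariant under `H` and killed by the ideal `J`. -/
def invKilled (H : Subgroup G) (J : Ideal A) : Submodule A M where
  carrier := {v | (∀ h : H, (h : G) • v = v) ∧ ∀ a ∈ J, a • v = 0}
  zero_mem' := ⟨fun _ => smul_zero _, fun _ _ => smul_zero _⟩
  add_mem' := fun hx hy =>
    ⟨fun h => by rw [smul_add, hx.1 h, hy.1 h],
     fun a ha => by rw [smul_add, hx.2 a ha, hy.2 a ha, add_zero]⟩
  smul_mem' := fun c v hv =>
    ⟨fun h => by rw [smul_comm, hv.1 h],
     fun a ha => by rw [smul_smul, mul_comm, ← smul_smul, hv.2 a ha, smul_zero]⟩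

variable [IsLocalRing A]

/-- A smooth `A[G]`-module: every vector is fixed by an open subgroup and killed by a power
of the maximal ideal. -/
def IsSmoothRep : Prop :=
  ∀ v : M, ∃ H : Subgroup G, IsOpen (H : Set G) ∧ ∃ i : ℕ, 1 ≤ i ∧
    v ∈ invKilled A G M H ((IsLocalRing.maximalIdeal A) ^ i)

/-- An admissible `A[G]`-module: for every open subgroup `H` and every `i ≥ 1`, the module
`V^H[𝔪^i]` is finitely generated. -/
def IsAdmissibleRep : Prop :=
  ∀ i : ℕ, 1 ≤ i → ∀ H : Subgroup G, IsOpen (H : Set G) →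
    (invKilled A G M H ((IsLocalRing.maximalIdeal A) ^ i)).FG

end Defs

/-! Taking `H`-invariants killed by `𝔪^i` is left exact, so `M₂^H[𝔪^i]` is an extension of
a submodule of `M₃^H[𝔪^i]` by a submodule of `M₁^H[𝔪^i]`. Over the Noetherian ring `A`
both are finitely generated, hence so is `M₂^H[𝔪^i]`. -/

theorem Submodule.fg_of_fg_map_of_fg_comap_of_range_eq_ker {R M₁ M₂ M₃ : Type*} [CommRing R]
    [AddCommGroup M₁] [Module R M₁] [AddCommGroup M₂] [Module R M₂]
    [AddCommGroup M₃] [Module R M₃] {f : M₁ →ₗ[R] M₂} {g : M₂ →ₗ[R] M₃}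
    (hexact : LinearMap.range f = LinearMap.ker g) {N : Submodule R M₂}
    (hg : (N.map g).FG) (hf : (N.comap f).FG) : N.FG := by
  refine fg_of_fg_map_of_fg_inf_ker g hg ?_
  rw [← hexact, inf_comm, ← map_comap_eq]
  exact hf.map f

section InvKilled

variable {A G M N : Type*} [CommRing A] [Group G]
  [AddCommGroup M] [Module A M] [DistribMulAction G M] [SMulCommClass G A M]
  [AddCommGroup N] [Module A N] [DistribMulAction G N] [SMulCommClass G A N]
  (H : Subgroup G) (J : Ideal A) {φ : M →ₗ[A] N}

theorem map_invKilled_le (hφ : ∀ (γ : G) (v : M), φ (γ • v) = γ • φ v) :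
    (invKilled A G M H J).map φ ≤ invKilled A G N H J := by
  rintro _ ⟨v, ⟨hfix, hkill⟩, rfl⟩
  exact ⟨fun h => by rw [← hφ, hfix h],
    fun a ha => by rw [← map_smul, hkill a ha, map_zero]⟩

theorem comap_invKilled_le (hφ : ∀ (γ : G) (v : M), φ (γ • v) = γ • φ v)
    (hinj : Function.Injective φ) :
    (invKilled A G N H J).comap φ ≤ invKilled A G M H J := by
  rintro v ⟨hfix, hkill⟩
  exact ⟨fun h => hinj (by rw [hφ, hfix h]),
    fun a ha => hinj (by rw [map_smul, hkill a ha, map_zero])⟩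

end InvKilled

theorem stmt8_general (A : Type*) [CommRing A] [IsLocalRing A] [IsNoetherianRing A]
    (G : Type*) [Group G] [TopologicalSpace G]
    (M₁ M₂ M₃ : Type*)
    [AddCommGroup M₁] [Module A M₁] [DistribMulAction G M₁] [SMulCommClass G A M₁]
    [AddCommGroup M₂] [Module A M₂] [DistribMulAction G M₂] [SMulCommClass G A M₂]
    [AddCommGroup M₃] [Module A M₃] [DistribMulAction G M₃] [SMulCommClass G A M₃]
    (f : M₁ →ₗ[A] M₂) (g : M₂ →ₗ[A] M₃)
    (hfG : ∀ (γ : G) (v : M₁), f (γ • v) = γ • f v)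
    (hgG : ∀ (γ : G) (v : M₂), g (γ • v) = γ • g v)
    (hfinj : Function.Injective f)
    (hexact : LinearMap.range f = LinearMap.ker g)
    (hadm₁ : IsAdmissibleRep A G M₁) (hadm₃ : IsAdmissibleRep A G M₃) :
    IsAdmissibleRep A G M₂ := by
  intro i hi H hH
  exact Submodule.fg_of_fg_map_of_fg_comap_of_range_eq_ker hexact
    ((hadm₃ i hi H hH).of_le (map_invKilled_le H _ hgG))
    ((hadm₁ i hi H hH).of_le (comap_invKilled_le H _ hfG hfinj))

/-- Let `(A, 𝔪)` be a complete Noetherian local ring with finite residue field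
of characteristic `p`, `G` a profinite group, and `0 → M₁ → M₂ → M₃ → 0` a short exact
sequence of smooth `A[G]`-modules.  If `M₁` and `M₃` are admissible, then so is `M₂`. -/
theorem stmt8 (p : ℕ) (hp : p.Prime) (A : Type*) [CommRing A] [IsLocalRing A]
    [IsNoetherianRing A] [IsAdicComplete (IsLocalRing.maximalIdeal A) A]
    (hfin : Finite (IsLocalRing.ResidueField A)) [CharP (IsLocalRing.ResidueField A) p]
    (G : Type*) [Group G] [TopologicalSpace G] [IsTopologicalGroup G]
    [CompactSpace G] [TotallyDisconnectedSpace G] [T2Space G]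
    (M₁ M₂ M₃ : Type*)
    [AddCommGroup M₁] [Module A M₁] [DistribMulAction G M₁] [SMulCommClass G A M₁]
    [AddCommGroup M₂] [Module A M₂] [DistribMulAction G M₂] [SMulCommClass G A M₂]
    [AddCommGroup M₃] [Module A M₃] [DistribMulAction G M₃] [SMulCommClass G A M₃]
    (hsm₁ : IsSmoothRep A G M₁) (hsm₂ : IsSmoothRep A G M₂) (hsm₃ : IsSmoothRep A G M₃)
    (f : M₁ →ₗ[A] M₂) (g : M₂ →ₗ[A] M₃)
    (hfG : ∀ (γ : G) (v : M₁), f (γ • v) = γ • f v)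
    (hgG : ∀ (γ : G) (v : M₂), g (γ • v) = γ • g v)
    (hfinj : Function.Injective f) (hgsurj : Function.Surjective g)
    (hexact : LinearMap.range f = LinearMap.ker g)
    (hadm₁ : IsAdmissibleRep A G M₁) (hadm₃ : IsAdmissibleRep A G M₃) :
    IsAdmissibleRep A G M₂ :=
  stmt8_general A G M₁ M₂ M₃ f g hfG hgG hfinj hexact hadm₁ hadm₃
end
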